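/- arXiv:1705.11156 — 2 statements merged into one kernel-verified Lean document; each statement's English description precedes it below -/
import Mathlib

section
/- The polynomial g(x, y) = x³ − x y⁶ + y⁹ (weighted homogeneous of type (9; 3, 1) with an isolated singularity at the origin) has Łojasiewicz exponent L(g) = 8. -/
open MvPolynomial

/-- Euclidean norm of the gradient of a polynomial `f` at `x`. -/
noncomputable def gradNorm {n : ℕ} (f : MvPolynomial (Fin n) ℝ) (x : Fin n → ℝ) : ℝ :=
  Real.sqrt (∑ i, (eval x (pderiv i f)) ^ 2)

/-- Euclidean norm on `Fin n → ℝ`. -/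
noncomputable def eNorm {n : ℕ} (x : Fin n → ℝ) : ℝ :=
  Real.sqrt (∑ i, (x i) ^ 2)

/-- `f` is weighted homogeneous of type `(d; w)`: every monomial `x^α` appearing in `f`
satisfies `∑ i, α i * w i = d`. -/
def IsWeightedHomog {n : ℕ} (f : MvPolynomial (Fin n) ℝ) (w : Fin n → ℕ) (d : ℕ) : Prop :=
  ∀ α ∈ f.support, ∑ i, α i * w i = d

/-- `f` is non-degenerate (isolated singularity at the origin): in some neighborhood of `0`
the gradient of `f` vanishes only at the origin. -/
def Nondeg {n : ℕ} (f : MvPolynomial (Fin n) ℝ) : Prop :=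
  ∃ U ∈ nhds (0 : Fin n → ℝ), ∀ x ∈ U, (∀ i, eval x (pderiv i f) = 0) → x = 0

/-- The Łojasiewicz inequality `‖∇f(x)‖ ≥ C ‖x‖^lam` holds near `0` for some `C > 0`. -/
def LojIneq {n : ℕ} (f : MvPolynomial (Fin n) ℝ) (lam : ℝ) : Prop :=
  ∃ C > (0 : ℝ), ∃ U ∈ nhds (0 : Fin n → ℝ), ∀ x ∈ U, C * eNorm x ^ lam ≤ gradNorm f x

/-- The Łojasiewicz exponent of `f`: the infimum of all `lam > 0` for which the
Łojasiewicz inequality holds near the origin. -/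
noncomputable def lojExp {n : ℕ} (f : MvPolynomial (Fin n) ℝ) : ℝ :=
  sInf {lam : ℝ | 0 < lam ∧ LojIneq f lam}

/-- The weighted "radius" `ρ(x) = (∑ i |x i| ^ (2 / w i)) ^ (1/2)`. -/
noncomputable def rho {n : ℕ} (w : Fin n → ℕ) (x : Fin n → ℝ) : ℝ :=
  Real.sqrt (∑ i, |x i| ^ ((2 : ℝ) / (w i : ℝ)))

/-- The weighted norm of the gradient:
`‖grad_w f(x)‖_w = (∑ i ρ(x)^(2 wᵢ) |∂f/∂xᵢ(x)|²)^(1/2)`. -/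
noncomputable def wGradNorm {n : ℕ} (w : Fin n → ℕ) (f : MvPolynomial (Fin n) ℝ)
    (x : Fin n → ℝ) : ℝ :=
  Real.sqrt (∑ i, rho w x ^ (2 * w i) * (eval x (pderiv i f)) ^ 2)

/-!
On the polar curve `3x² = y⁶`, parametrised as `(t³/√3, t)`, the partial `∂g/∂x` vanishes and
`‖∇g‖ = (9 - 2√3) t⁸` while `‖(x, y)‖ ≥ t`; so no exponent below `8` is admissible.
Conversely `(x² + y²)⁸ ≤ 9216 ‖∇g‖²` near the origin. Where `y⁴ < x²` the term `3x²` dominates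
`∂g/∂x`. Where `x² ≤ y⁴` we have `x² + y² ≤ 2y²`, and either `∂g/∂y = 3y⁵(3y³ - 2x)` has size `y⁸`,
or `x` is close to `3y³/2` and then `∂g/∂x` has size `y⁶`.
-/

open Filter Topology

section

variable {n : ℕ} {f : MvPolynomial (Fin n) ℝ}

theorem abs_le_eNorm (x : Fin n → ℝ) (i : Fin n) : |x i| ≤ eNorm x :=
  Real.abs_le_sqrt <| Finset.single_le_sum (fun j _ => sq_nonneg (x j)) (Finset.mem_univ i)

theorem lojExp_eq_of_lojIneq_of_le {μ : ℝ} (hμ : 0 < μ) (hloj : LojIneq f μ)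
    (hle : ∀ lam, 0 < lam → LojIneq f lam → μ ≤ lam) : lojExp f = μ :=
  IsLeast.csInf_eq ⟨⟨hμ, hloj⟩, fun lam h => hle lam h.1 h.2⟩

theorem lojIneq_of_eventually_sum_sq_le {C : ℝ} (hC : 0 < C) (m : ℕ)
    (h : ∀ᶠ x in 𝓝 0, C * (∑ i, x i ^ 2) ^ m ≤ ∑ i, (eval x (pderiv i f)) ^ 2) :
    LojIneq f m := by
  refine ⟨√C, Real.sqrt_pos.2 hC, _, h, fun x hx => ?_⟩
  rw [Real.rpow_natCast, gradNorm, eNorm, Real.le_sqrt (by positivity) (by positivity),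
    mul_pow, ← pow_mul, mul_comm m, pow_mul, Real.sq_sqrt hC.le,
    Real.sq_sqrt (by positivity)]
  exact hx

theorem le_of_lojIneq_of_tendsto {p : ℝ → Fin n → ℝ} {K μ lam : ℝ}
    (hp : Tendsto p (𝓝[>] 0) (𝓝 0)) (hnorm : ∀ᶠ t in 𝓝[>] 0, t ≤ eNorm (p t))
    (hgrad : ∀ᶠ t in 𝓝[>] 0, gradNorm f (p t) ≤ K * t ^ μ)
    (hlam : 0 ≤ lam) (hloj : LojIneq f lam) : μ ≤ lam := by
  by_contra! hlt
  obtain ⟨C, hC, U, hU, hCU⟩ := hloj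
  have hsmall : ∀ᶠ t in 𝓝[>] 0, K * t ^ (μ - lam) < C := by
    have : ContinuousAt (fun t : ℝ => K * t ^ (μ - lam)) 0 :=
      continuousAt_const.mul (Real.continuousAt_rpow_const _ _ (Or.inr (by linarith)))
    refine (this.tendsto.mono_left nhdsWithin_le_nhds).eventually_lt_const ?_
    simpa [Real.zero_rpow (sub_pos.2 hlt).ne'] using hC
  suffices ∀ᶠ _ in 𝓝[>] (0 : ℝ), False from this.exists.elim fun _ => id
  filter_upwards [self_mem_nhdsWithin, hp hU, hnorm, hgrad, hsmall]
    with t (ht0 : 0 < t) htU hnorm hgrad hsmall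
  have : C * t ^ lam ≤ K * t ^ (μ - lam) * t ^ lam := calc
    C * t ^ lam ≤ C * eNorm (p t) ^ lam := by gcongr
    _ ≤ gradNorm f (p t) := hCU _ htU
    _ ≤ K * t ^ μ := hgrad
    _ = K * t ^ (μ - lam) * t ^ lam := by rw [mul_assoc, ← Real.rpow_add ht0, sub_add_cancel]
  exact (le_of_mul_le_mul_right this (Real.rpow_pos_of_pos ht0 lam)).not_gt hsmall

end

namespace LojExample

noncomputable def g : MvPolynomial (Fin 2) ℝ := X 0 ^ 3 - X 0 * X 1 ^ 6 + X 1 ^ 9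

theorem sum_sq_eval_pderiv_g (x : Fin 2 → ℝ) :
    ∑ i, (eval x (pderiv i g)) ^ 2
      = (3 * x 0 ^ 2 - x 1 ^ 6) ^ 2 + (9 * x 1 ^ 8 - 6 * x 0 * x 1 ^ 5) ^ 2 := by
  simp only [g, Fin.sum_univ_two, map_add, map_sub, map_mul, map_pow, Derivation.leibniz_pow,
    Derivation.leibniz, pderiv_X, Pi.single_apply, eval_X, smul_eq_mul, nsmul_eq_mul]
  norm_num
  ring

theorem pow_eight_le_of_sq_lt {a b : ℝ} (ha : a ^ 2 ≤ 1 / 4) (hb : b ^ 2 ≤ 1 / 4)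
    (hab : b ^ 4 < a ^ 2) : (a ^ 2 + b ^ 2) ^ 8 ≤ (3 * a ^ 2 - b ^ 6) ^ 2 := by
  have hb6 : b ^ 6 ≤ a ^ 2 / 4 := by nlinarith [sq_nonneg b]
  have hfx : 11 / 4 * a ^ 2 ≤ 3 * a ^ 2 - b ^ 6 := by linarith
  have hsum : (a ^ 2 + b ^ 2) ^ 2 ≤ 2 * a ^ 2 := by nlinarith [sq_nonneg a, sq_nonneg (a * b)]
  have ha4 : a ^ 4 ≤ 1 / 16 := by nlinarith [sq_nonneg a]
  calc (a ^ 2 + b ^ 2) ^ 8 = ((a ^ 2 + b ^ 2) ^ 2) ^ 4 := by ring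
    _ ≤ (2 * a ^ 2) ^ 4 := by gcongr
    _ = 16 * a ^ 4 * a ^ 4 := by ring
    _ ≤ 16 * (1 / 16) * a ^ 4 := by gcongr
    _ ≤ (11 / 4 * a ^ 2) ^ 2 := by nlinarith [sq_nonneg a]
    _ ≤ (3 * a ^ 2 - b ^ 6) ^ 2 := by gcongr

theorem pow_eight_le_of_sq_le {a b : ℝ} (hb : b ^ 2 ≤ 1 / 4) (hab : a ^ 2 ≤ b ^ 4) :
    (a ^ 2 + b ^ 2) ^ 8
      ≤ 9216 * ((3 * a ^ 2 - b ^ 6) ^ 2 + (9 * b ^ 8 - 6 * a * b ^ 5) ^ 2) := by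
  have hb4 : b ^ 4 ≤ b ^ 2 := by nlinarith [sq_nonneg b]
  have h8 : (a ^ 2 + b ^ 2) ^ 8 ≤ 256 * b ^ 16 :=
    calc (a ^ 2 + b ^ 2) ^ 8 ≤ (2 * b ^ 2) ^ 8 := by gcongr; linarith
      _ = 256 * b ^ 16 := by ring
  set v := 3 * b ^ 3 - 2 * a
  have hfy : (9 * b ^ 8 - 6 * a * b ^ 5) ^ 2 = 9 * b ^ 10 * v ^ 2 := by ring
  suffices b ^ 16 ≤ 36 * ((3 * a ^ 2 - b ^ 6) ^ 2 + 9 * b ^ 10 * v ^ 2) by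
    rw [hfy]; linarith
  rcases le_or_gt (b ^ 6 / 324) (v ^ 2) with hv | hv
  · have : b ^ 10 * (b ^ 6 / 324) ≤ b ^ 10 * v ^ 2 := by gcongr
    nlinarith [sq_nonneg (3 * a ^ 2 - b ^ 6)]
  · -- `a` is close to `3 b³ / 2`, where `∂g/∂x = (23 b⁶ - 18 b³ v + 3 v²) / 4` is of size `b⁶`
    have hbv : 18 * (b ^ 3 * v) ≤ b ^ 6 := by nlinarith [sq_nonneg (b ^ 3 - 18 * v)]
    have hfx : 11 / 2 * b ^ 6 ≤ 3 * a ^ 2 - b ^ 6 := by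
      have : 4 * (3 * a ^ 2 - b ^ 6) = 23 * b ^ 6 - 18 * (b ^ 3 * v) + 3 * v ^ 2 := by ring
      nlinarith [sq_nonneg v]
    have hb16 : b ^ 16 ≤ b ^ 12 := by
      have : b ^ 4 ≤ 1 := by nlinarith
      nlinarith [pow_nonneg (sq_nonneg b) 6]
    nlinarith [mul_self_le_mul_self (by positivity) hfx, sq_nonneg (b ^ 5 * v)]

theorem pow_eight_le_sum_sq_partials {a b : ℝ} (ha : a ^ 2 ≤ 1 / 4) (hb : b ^ 2 ≤ 1 / 4) :
    (a ^ 2 + b ^ 2) ^ 8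
      ≤ 9216 * ((3 * a ^ 2 - b ^ 6) ^ 2 + (9 * b ^ 8 - 6 * a * b ^ 5) ^ 2) := by
  rcases le_or_gt (a ^ 2) (b ^ 4) with hab | hab
  · exact pow_eight_le_of_sq_le hb hab
  · nlinarith [pow_eight_le_of_sq_lt ha hb hab, sq_nonneg (9 * b ^ 8 - 6 * a * b ^ 5)]

theorem lojIneq_g : LojIneq g 8 := by
  suffices ∀ᶠ x in 𝓝 (0 : Fin 2 → ℝ), 1 / 9216 * (∑ i, x i ^ 2) ^ 8
      ≤ ∑ i, (eval x (pderiv i g)) ^ 2 by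
    exact_mod_cast lojIneq_of_eventually_sum_sq_le (by norm_num) 8 this
  have hsmall (i : Fin 2) : ∀ᶠ x in 𝓝 (0 : Fin 2 → ℝ), x i ^ 2 < 1 / 4 :=
    ((continuous_apply i).pow 2).tendsto' 0 0 (by simp) |>.eventually_lt_const (by norm_num)
  filter_upwards [hsmall 0, hsmall 1] with x h0 h1
  rw [Fin.sum_univ_two, sum_sq_eval_pderiv_g]
  linarith [pow_eight_le_sum_sq_partials h0.le h1.le]

theorem gradNorm_g_polar (t : ℝ) : gradNorm g ![t ^ 3 / √3, t] = (9 - 2 * √3) * t ^ 8 := by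
  have h3 : √3 ^ 2 = 3 := Real.sq_sqrt (by norm_num)
  have hK : 0 ≤ 9 - 2 * √3 := by nlinarith [Real.sqrt_nonneg 3]
  have hfx : 3 * (t ^ 3 / √3) ^ 2 - t ^ 6 = 0 := by
    rw [div_pow, h3]; ring
  have hfy : 9 * t ^ 8 - 6 * (t ^ 3 / √3) * t ^ 5 = (9 - 2 * √3) * t ^ 8 := by
    field_simp
    linear_combination 2 * t ^ 8 * h3
  rw [gradNorm, sum_sq_eval_pderiv_g]
  simp only [Matrix.cons_val_zero, Matrix.cons_val_one, hfx, hfy]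
  rw [zero_pow two_ne_zero, zero_add, Real.sqrt_sq (by positivity)]

theorem eight_le_of_lojIneq_g {lam : ℝ} (hlam : 0 ≤ lam) (h : LojIneq g lam) : 8 ≤ lam := by
  have hp : Continuous fun t : ℝ => ![t ^ 3 / √3, t] := by fun_prop
  refine le_of_lojIneq_of_tendsto (K := 9 - 2 * √3)
    (hp.tendsto' 0 0 (by simp) |>.mono_left nhdsWithin_le_nhds) ?_ ?_ hlam h
  · filter_upwards [self_mem_nhdsWithin] with t (ht : 0 < t)
    simpa [abs_of_pos ht] using abs_le_eNorm ![t ^ 3 / √3, t] 1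
  · exact .of_forall fun t => by exact_mod_cast (gradNorm_g_polar t).le

end LojExample

theorem stmt14 :
    lojExp ((X 0) ^ 3 - X 0 * (X 1) ^ 6 + (X 1) ^ 9 : MvPolynomial (Fin 2) ℝ) = 8 :=
  lojExp_eq_of_lojIneq_of_le (by norm_num) LojExample.lojIneq_g
    fun _ hlam h => LojExample.eight_le_of_lojIneq_g hlam.le h
end

section
/- Let f : ℝ² → ℝ be a weighted homogeneous polynomial of type (d; w₁, w₂) with w₂ ≤ w₁. Then there exist C > 0 and a neighborhood U of 0 such that ρ(x)^{w₂} · ‖∇f(x)‖ ≥ C · ‖grad_w f(x)‖_w for all x ∈ U, where ρ(x) = (|x₁|^{2/w₁} + |x₂|^{2/w₂})^{1/2} and ‖grad_w f(x)‖_w = (ρ(x)^{2w₁}|∂f/∂x₁(x)|² + ρ(x)^{2w₂}|∂f/∂x₂(x)|²)^{1/2}. -/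
open MvPolynomial

section WeightedRadius

variable {n : ℕ} (w : Fin n → ℕ)

theorem continuous_rho : Continuous (rho w) :=
  Real.continuous_sqrt.comp <| continuous_finsetSum _ fun i _ =>
    (continuous_apply i).abs.rpow_const fun _ => Or.inr (by positivity)

theorem rho_zero (hw : ∀ i, w i ≠ 0) : rho w 0 = 0 := by
  have hexp : ∀ i, (2 : ℝ) / (w i : ℝ) ≠ 0 := fun i => by simpa using hw i
  simp [rho, Real.zero_rpow, hexp]

theorem setOf_rho_lt_one_mem_nhds (hw : ∀ i, w i ≠ 0) : {x | rho w x < 1} ∈ nhds 0 :=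
  (isOpen_lt (continuous_rho w) continuous_const).mem_nhds (by simp [rho_zero w hw])

theorem wGradNorm_le_rho_pow_mul_gradNorm {m : ℕ} (hm : ∀ i, m ≤ w i)
    (f : MvPolynomial (Fin n) ℝ) {x : Fin n → ℝ} (hx : rho w x ≤ 1) :
    wGradNorm w f x ≤ rho w x ^ m * gradNorm f x := by
  have hρ : 0 ≤ rho w x := Real.sqrt_nonneg _
  have hsum : ∑ i, rho w x ^ (2 * w i) * (eval x (pderiv i f)) ^ 2
      ≤ (rho w x ^ m) ^ 2 * ∑ i, (eval x (pderiv i f)) ^ 2 := by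
    rw [Finset.mul_sum]
    gcongr with i
    rw [← pow_mul, mul_comm m]
    exact pow_le_pow_of_le_one hρ hx (by grind)
  calc wGradNorm w f x
      ≤ Real.sqrt ((rho w x ^ m) ^ 2 * ∑ i, (eval x (pderiv i f)) ^ 2) :=
        Real.sqrt_le_sqrt hsum
    _ = rho w x ^ m * gradNorm f x := by
        rw [Real.sqrt_mul (sq_nonneg _), Real.sqrt_sq (by positivity), gradNorm]

end WeightedRadius

theorem stmt17_general (w₁ w₂ : ℕ) (hw₂ : 0 < w₂) (hw : w₂ ≤ w₁)
    (f : MvPolynomial (Fin 2) ℝ) :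
    ∃ C > (0 : ℝ), ∃ U ∈ nhds (0 : Fin 2 → ℝ), ∀ x ∈ U,
      C * wGradNorm ![w₁, w₂] f x ≤ rho ![w₁, w₂] x ^ w₂ * gradNorm f x := by
  have hmin : ∀ i, w₂ ≤ ![w₁, w₂] i := Fin.forall_fin_two.2 ⟨hw, le_rfl⟩
  have hpos : ∀ i, ![w₁, w₂] i ≠ 0 := fun i => (hw₂.trans_le (hmin i)).ne'
  refine ⟨1, one_pos, _, setOf_rho_lt_one_mem_nhds _ hpos, fun x hx => ?_⟩
  rw [one_mul]
  exact wGradNorm_le_rho_pow_mul_gradNorm _ hmin f hx.le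

theorem stmt17 (d w₁ w₂ : ℕ) (hd : 0 < d) (hw₂ : 0 < w₂) (hw : w₂ ≤ w₁)
    (f : MvPolynomial (Fin 2) ℝ)
    (hhom : IsWeightedHomog f ![w₁, w₂] d) :
    ∃ C > (0 : ℝ), ∃ U ∈ nhds (0 : Fin 2 → ℝ), ∀ x ∈ U,
      C * wGradNorm ![w₁, w₂] f x ≤ rho ![w₁, w₂] x ^ w₂ * gradNorm f x :=
  stmt17_general w₁ w₂ hw₂ hw f
end
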